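/- Closed-form for the q-Euler polynomial of order r: for 0 < q < 1, r ≥ 1, h ∈ ℤ with h - r + l > 0 ranges making series converge, and n ≥ 0, one has E_{n,q}^{(h,r)}(x) := 2^r ∑_{m=0}^∞ (m+r-1 choose m)_q (-q^{h-r})^m [m+x]_q^n = (2^r/(1-q)^n) ∑_{l=0}^n (n choose l)(-q^x)^l / (−q^{h-r+l}; q)_r, where (a;q)_r = ∏_{j=0}^{r-1}(1 - a q^j). -/

import Mathlib

/-!
Expand `[m + x]_q^n = (1 - q^x q^m)^n / (1 - q)^n` by the binomial theorem and exchange the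
finite sum over `l` with the series over `m`. Each resulting series is an instance of
Cauchy's `q`-binomial theorem `∑ₘ (m+s choose m)_q zᵐ = ∏_{j=0}^{s} (1 - z qʲ)⁻¹` at
`z = -q^{h-r+l}`.
That theorem follows by induction on `s`: the `q`-Pascal rule shows that the series for `s + 1`
is `(1 - z)⁻¹` times the series for `s` at `q z`.
-/

/-- The `q`-number `[z]_q = (1 - q^z)/(1 - q)` for real `z`. -/
noncomputable def qNum (q z : ℝ) : ℝ := (1 - q ^ z) / (1 - q)

/-- The Gaussian binomial coefficient `(n choose k)_q`, defined by the
`q`-Pascal recursion. -/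
def gaussBinom {R : Type*} [CommRing R] (q : R) : ℕ → ℕ → R
  | _, 0 => 1
  | 0, _ + 1 => 0
  | n + 1, k + 1 => gaussBinom q n (k + 1) * q ^ (k + 1) + gaussBinom q n k

open Finset

section GaussBinom

variable {R : Type*} [CommRing R] (q : R)

@[simp]
lemma gaussBinom_zero_right (n : ℕ) : gaussBinom q n 0 = 1 := by
  cases n <;> rfl

lemma gaussBinom_succ_succ (n k : ℕ) :
    gaussBinom q (n + 1) (k + 1) = gaussBinom q n (k + 1) * q ^ (k + 1) + gaussBinom q n k :=
  rfl

lemma gaussBinom_eq_zero_of_lt : ∀ {n k : ℕ}, n < k → gaussBinom q n k = 0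
  | 0, _ + 1, _ => rfl
  | n + 1, k + 1, h => by
    rw [gaussBinom_succ_succ, gaussBinom_eq_zero_of_lt (by omega),
      gaussBinom_eq_zero_of_lt (by omega), zero_mul, add_zero]

@[simp]
lemma gaussBinom_self : ∀ n : ℕ, gaussBinom q n n = 1
  | 0 => rfl
  | n + 1 => by
    rw [gaussBinom_succ_succ, gaussBinom_eq_zero_of_lt q n.lt_succ_self, gaussBinom_self n,
      zero_mul, zero_add]

end GaussBinom

section QBinomialTheorem

variable {𝕂 : Type*} [NormedField 𝕂] {q : 𝕂}

lemma norm_gaussBinom_le_choose (hq : ‖q‖ ≤ 1) :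
    ∀ n k : ℕ, ‖gaussBinom q n k‖ ≤ n.choose k
  | n, 0 => by simp
  | 0, k + 1 => by simp [gaussBinom]
  | n + 1, k + 1 => by
    rw [gaussBinom_succ_succ, Nat.choose_succ_succ, Nat.cast_add]
    calc ‖gaussBinom q n (k + 1) * q ^ (k + 1) + gaussBinom q n k‖
        ≤ ‖gaussBinom q n (k + 1)‖ * ‖q‖ ^ (k + 1) + ‖gaussBinom q n k‖ := by
          grw [norm_add_le, norm_mul, norm_pow]
      _ ≤ n.choose (k + 1) * 1 + n.choose k := by
          gcongr
          exacts [norm_gaussBinom_le_choose hq n (k + 1), pow_le_one₀ (norm_nonneg q) hq,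
            norm_gaussBinom_le_choose hq n k]
      _ = n.choose k + n.choose (k + 1) := by ring

variable [CompleteSpace 𝕂]

lemma summable_gaussBinom_mul_pow (hq : ‖q‖ ≤ 1) (s : ℕ) {z : 𝕂} (hz : ‖z‖ < 1) :
    Summable fun m : ℕ ↦ gaussBinom q (m + s) m * z ^ m := by
  refine .of_norm_bounded
    (summable_choose_mul_geometric_of_norm_lt_one s (r := ‖z‖) (by simpa using hz)) fun m ↦ ?_
  rw [norm_mul, norm_pow, ← Nat.choose_symm_add]
  gcongr
  exact norm_gaussBinom_le_choose hq _ _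

theorem hasSum_gaussBinom_mul_pow (hq : ‖q‖ ≤ 1) (s : ℕ) {z : 𝕂} (hz : ‖z‖ < 1) :
    HasSum (fun m : ℕ ↦ gaussBinom q (m + s) m * z ^ m)
      (∏ j ∈ range (s + 1), (1 - z * q ^ j))⁻¹ := by
  induction s generalizing z with
  | zero => simpa using hasSum_geometric_of_norm_lt_one hz
  | succ s ih =>
    have hqz : ‖q * z‖ < 1 := by
      rw [norm_mul]
      exact lt_of_le_of_lt (mul_le_of_le_one_left (norm_nonneg z) hq) hz
    set a : ℕ → 𝕂 := fun m ↦ gaussBinom q (m + (s + 1)) m * z ^ m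
    set b : ℕ → 𝕂 := fun m ↦ gaussBinom q (m + s) m * (q * z) ^ m
    set B := (∏ j ∈ range (s + 1), (1 - q * z * q ^ j))⁻¹ with hB
    have hb : HasSum b B := ih hqz
    have hpascal : ∀ m, a (m + 1) = b (m + 1) + z * a m := fun m ↦ by
      simp only [a, b, show m + 1 + (s + 1) = m + 1 + s + 1 by omega, gaussBinom_succ_succ,
        show m + 1 + s = m + (s + 1) by omega]
      ring
    obtain ⟨A, hA⟩ := summable_gaussBinom_mul_pow hq (s + 1) hz
    have hshift : HasSum (fun m ↦ a (m + 1)) (A - 1) := by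
      simpa [a] using (hasSum_nat_add_iff' 1).mpr hA
    have hshift' : HasSum (fun m ↦ a (m + 1)) (B - 1 + z * A) := by
      have hb0 : b 0 = 1 := by simp [b]
      have := ((hasSum_nat_add_iff' 1).mpr hb).add (hA.mul_left z)
      rw [sum_range_one, hb0] at this
      simpa only [hpascal] using this
    have hAB : A * (1 - z) = B := by linear_combination hshift.unique hshift'
    have hz1 : 1 - z ≠ 0 := sub_ne_zero.mpr fun h ↦ by simp [← h] at hz
    have hprod : ∏ j ∈ range (s + 1), (1 - z * q ^ (j + 1)) =
        ∏ j ∈ range (s + 1), (1 - q * z * q ^ j) :=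
      prod_congr rfl fun j _ ↦ by ring
    convert hA using 1
    rw [prod_range_succ', hprod, mul_inv, ← hB, pow_zero, mul_one, ← hAB]
    field_simp

end QBinomialTheorem

lemma qNum_natCast_add_pow {q : ℝ} (hq : 0 < q) (x : ℝ) (m n : ℕ) :
    qNum q (m + x) ^ n =
      ∑ l ∈ range (n + 1), n.choose l * (-(q ^ x)) ^ l / (1 - q) ^ n * (q ^ l) ^ m := by
  rw [qNum, div_pow, Real.rpow_add hq, Real.rpow_natCast, ← neg_add_eq_sub, add_pow, sum_div]
  refine sum_congr rfl fun l _ ↦ ?_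
  ring

theorem qEuler_closed_form (q x : ℝ) (hq0 : 0 < q) (hq1 : q < 1)
    (r : ℕ) (hr : 1 ≤ r) (h : ℤ) (hh : (r : ℤ) < h) (n : ℕ) :
    (2 : ℝ) ^ r * ∑' m : ℕ,
        gaussBinom q (m + r - 1) m * (-(q ^ ((h : ℝ) - r))) ^ m * qNum q (m + x) ^ n
      = (2 : ℝ) ^ r / (1 - q) ^ n *
          ∑ l ∈ Finset.range (n + 1),
            (n.choose l : ℝ) * (-(q ^ x)) ^ l /
              ∏ j ∈ Finset.range r, (1 + q ^ ((h : ℝ) - r + l + j)) := by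
  obtain ⟨s, rfl⟩ : ∃ s, r = s + 1 := ⟨r - 1, by omega⟩
  set a : ℝ := (h : ℝ) - ↑(s + 1)
  have ha : 0 < a := by
    have : ((s + 1 : ℕ) : ℝ) < h := by exact_mod_cast hh
    simp only [a]; linarith
  have hterm : ∀ m : ℕ,
      gaussBinom q (m + (s + 1) - 1) m * (-(q ^ a)) ^ m * qNum q (m + x) ^ n =
        ∑ l ∈ range (n + 1), n.choose l * (-(q ^ x)) ^ l / (1 - q) ^ n *
          (gaussBinom q (m + s) m * (-(q ^ (a + l))) ^ m) := fun m ↦ by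
    rw [Nat.add_succ_sub_one, qNum_natCast_add_pow hq0, mul_sum]
    refine sum_congr rfl fun l _ ↦ ?_
    rw [Real.rpow_add hq0, Real.rpow_natCast]
    ring
  have hq : ‖q‖ ≤ 1 := by rw [Real.norm_of_nonneg hq0.le]; exact hq1.le
  have hz : ∀ l : ℕ, ‖-(q ^ (a + l))‖ < 1 := fun l ↦ by
    rw [norm_neg, Real.norm_of_nonneg (by positivity)]
    exact Real.rpow_lt_one hq0.le hq1 (by positivity)
  have hsum := hasSum_sum fun l (_ : l ∈ range (n + 1)) ↦
    (hasSum_gaussBinom_mul_pow hq s (hz l)).mul_left (n.choose l * (-(q ^ x)) ^ l / (1 - q) ^ n)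
  rw [tsum_congr hterm, hsum.tsum_eq, mul_sum, mul_sum]
  refine sum_congr rfl fun l _ ↦ ?_
  have hprod : ∏ j ∈ range (s + 1), (1 - -(q ^ (a + l)) * q ^ j) =
      ∏ j ∈ range (s + 1), (1 + q ^ (a + l + j)) :=
    prod_congr rfl fun j _ ↦ by rw [Real.rpow_add hq0 _ j, Real.rpow_natCast]; ring
  rw [hprod]
  ring
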